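/- arXiv:2604.17116 — 2 statements merged into one kernel-verified Lean document; each statement's English description precedes it below -/
import Mathlib

section
/- Let (X, μ) be a finite measure space, (Sₙ) a sequence of measurable sets, and for k ≥ 1 let T_k be the set of points contained in at least k of the sets Sₙ. Then for each k, T_k is measurable and μ(T_k) ≥ liminf_{n→∞} μ(Sₙ). -/
open MeasureTheory Filter

theorem stmt_1 {X : Type*} [MeasurableSpace X] (μ : Measure X) [IsFiniteMeasure μ]
    (S : ℕ → Set X) (hS : ∀ n, MeasurableSet (S n))
    (T : ℕ → Set X) (hT : ∀ k, T k = {x | (k : ℕ∞) ≤ {n | x ∈ S n}.encard}) :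
    ∀ k : ℕ, 1 ≤ k →
      MeasurableSet (T k) ∧ Filter.atTop.liminf (fun n => μ (S n)) ≤ μ (T k) := by
  intro k hk
  have hTk : T k = ⋃ (F : Finset ℕ) (_ : F.card = k), ⋂ i ∈ F, S i := by
    rw [hT k]
    ext x
    simp only [Set.mem_setOf_eq, Set.mem_iUnion, Set.mem_iInter]
    constructor
    · intro h
      obtain ⟨t, hts, htk⟩ := Set.exists_subset_encard_eq h
      have htfin : t.Finite := Set.finite_of_encard_eq_coe htk
      refine ⟨htfin.toFinset, ?_, fun i hi => hts (htfin.mem_toFinset.mp hi)⟩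
      have hcast : ((htfin.toFinset.card : ℕ∞)) = (k : ℕ∞) := by
        rw [← Set.encard_coe_eq_coe_finsetCard, htfin.coe_toFinset, htk]
      exact_mod_cast hcast
    · rintro ⟨F, hF, hmem⟩
      have : (F : Set ℕ) ⊆ {n | x ∈ S n} := fun i hi => hmem i hi
      calc (k : ℕ∞) = (F : Set ℕ).encard := by
              rw [Set.encard_coe_eq_coe_finsetCard, hF]
        _ ≤ _ := Set.encard_mono this
  have hTmeas : MeasurableSet (T k) := by
    rw [hTk]
    exact MeasurableSet.iUnion fun F => MeasurableSet.iUnion fun _ =>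
      F.measurableSet_biInter fun i _ => hS i
  refine ⟨hTmeas, ?_⟩
  set A : ℕ → Set X := fun n => ⋃ i, ⋃ (_ : n ≤ i), S i with hA
  have hAmeas : ∀ n, MeasurableSet (A n) := fun n =>
    MeasurableSet.iUnion fun i => MeasurableSet.iUnion fun _ => hS i
  have hAanti : Antitone A := fun m n hmn =>
    Set.iUnion₂_mono' fun i hi => ⟨i, hmn.trans hi, subset_rfl⟩
  have hsub : (⋂ n, A n) ⊆ T k := by
    intro x hx
    rw [hT k]
    have hinf : {n | x ∈ S n}.Infinite := by
      rw [← Nat.frequently_atTop_iff_infinite, frequently_atTop]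
      intro n
      have := Set.mem_iInter.mp hx n
      obtain ⟨i, hi, hxi⟩ := Set.mem_iUnion₂.mp this
      exact ⟨i, hi, hxi⟩
    simp [Set.mem_setOf_eq, hinf.encard_eq]
  have hIA : μ (⋂ n, A n) = ⨅ n, μ (A n) :=
    hAanti.measure_iInter (fun n => (hAmeas n).nullMeasurableSet) ⟨0, measure_ne_top μ _⟩
  calc Filter.atTop.liminf (fun n => μ (S n))
      = ⨆ n, ⨅ i, ⨅ (_ : n ≤ i), μ (S i) := liminf_eq_iSup_iInf_of_nat
    _ ≤ ⨅ n, μ (A n) := by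
        refine iSup_le fun m => le_iInf fun n => ?_
        calc ⨅ i, ⨅ (_ : m ≤ i), μ (S i) ≤ μ (S (max m n)) :=
              iInf₂_le (max m n) (le_max_left m n)
          _ ≤ μ (A n) := measure_mono (fun x hx => Set.mem_iUnion₂.mpr ⟨max m n, le_max_right m n, hx⟩)
    _ = μ (⋂ n, A n) := hIA.symm
    _ ≤ μ (T k) := measure_mono hsub
end

section
/- Let ℓ : (0, π) → ℝ be differentiable at θ, let I ∋ θ be an open interval, and let 𝒜₁, …, 𝒜ₙ : I → ℝ be finitely many differentiable functions such that for every ψ ∈ I there exists k with ℓ(ψ) = 𝒜ₖ(ψ). Then there exists an index k such that ℓ(θ) = 𝒜ₖ(θ) and ℓ'(θ) = 𝒜ₖ'(θ). -/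
open Real Filter Topology

theorem stmt_17 (ℓ : ℝ → ℝ) (θ a b : ℝ) (hθ : θ ∈ Set.Ioo a b)
    (hℓ : DifferentiableAt ℝ ℓ θ)
    (n : ℕ) (𝒜 : Fin n → ℝ → ℝ)
    (h𝒜 : ∀ k : Fin n, ∀ x ∈ Set.Ioo a b, DifferentiableAt ℝ (𝒜 k) x)
    (hsel : ∀ ψ ∈ Set.Ioo a b, ∃ k : Fin n, ℓ ψ = 𝒜 k ψ) :
    ∃ k : Fin n, ℓ θ = 𝒜 k θ ∧ deriv ℓ θ = deriv (𝒜 k) θ := by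
  have hmem : ∀ᶠ ψ in 𝓝[≠] θ, ψ ∈ Set.Ioo a b :=
    eventually_nhdsWithin_of_eventually_nhds
      ((isOpen_Ioo.eventually_mem hθ))
  have hev : ∀ᶠ ψ in 𝓝[≠] θ, ∃ k : Fin n, ℓ ψ = 𝒜 k ψ :=
    hmem.mono fun ψ hψ => hsel ψ hψ
  -- pigeonhole: one index occurs frequently
  have hfreq : ∃ k : Fin n, ∃ᶠ ψ in 𝓝[≠] θ, ℓ ψ = 𝒜 k ψ := by
    by_contra h
    push_neg at h
    have : ∀ᶠ ψ in 𝓝[≠] θ, ∀ k : Fin n, ¬ ℓ ψ = 𝒜 k ψ :=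
      eventually_all.2 h
    have := (hev.and this).exists
    rcases this with ⟨ψ, ⟨k, hk⟩, hall⟩
    exact hall k hk
  obtain ⟨k, hk⟩ := hfreq
  have hAk : DifferentiableAt ℝ (𝒜 k) θ := h𝒜 k θ hθ
  set g : ℝ → ℝ := fun x => ℓ x - 𝒜 k x with hg
  have hgd : DifferentiableAt ℝ g θ := hℓ.sub hAk
  have hkg : ∃ᶠ ψ in 𝓝[≠] θ, g ψ = 0 := hk.mono fun ψ hψ => by simp [hg, hψ]
  -- value at θ
  have hcont : Tendsto g (𝓝[≠] θ) (𝓝 (g θ)) :=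
    (hgd.continuousAt.tendsto).mono_left nhdsWithin_le_nhds
  have hg0 : g θ = 0 :=
    tendsto_nhds_unique_of_frequently_eq hcont tendsto_const_nhds hkg
  -- derivative at θ
  have hslope : Tendsto (slope g θ) (𝓝[≠] θ) (𝓝 (deriv g θ)) :=
    (hasDerivAt_iff_tendsto_slope.1 hgd.hasDerivAt)
  have hfs : ∃ᶠ ψ in 𝓝[≠] θ, slope g θ ψ = 0 := by
    refine hkg.mono fun ψ hψ => ?_
    simp [slope, hψ, hg0]
  have hd0 : deriv g θ = 0 :=
    tendsto_nhds_unique_of_frequently_eq hslope tendsto_const_nhds hfs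
  have hderiv : deriv ℓ θ - deriv (𝒜 k) θ = 0 := by
    rw [← deriv_sub hℓ hAk]; exact hd0
  refine ⟨k, ?_, ?_⟩
  · have := hg0; simp only [hg] at this; linarith
  · linarith
end
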